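/- arXiv:1701.07227 — 5 statements merged into one kernel-verified Lean document; each statement's English description precedes it below -/
import Mathlib

section
/- Let d ≥ 2 be a real number and k a positive integer. For nonnegative integers a_0, a_1, ..., a_k, consider the quantity S = Σ_{i=0}^{k} a_i · 2^{(k-i)/d} / (7+i)^{2/d}, subject to the constraint A = Σ_{i=0}^{k} a_i · 2^{k-i} being fixed with A ≥ 2. Then S is minimized over all such tuples only at tuples where a_1, ..., a_k ∈ {0,1}. More precisely: if a_i ≥ 2 for some i > 0, then replacing (a_{i-1}, a_i) by (a_{i-1}+1, a_i-2) preserves the constraint and strictly decreases S. -/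
open Finset

/-!
The move changes any weighted sum `∑ a j * w j` by `w (i-1) - 2 * w i`. For the weights
`2 ^ (k - j)` this vanishes, and for `w j = 2 ^ ((k - j) / d) / (7 + j) ^ (2 / d)` it is negative
because, after raising to the `d`-th power, it amounts to `2 (8 + x)² < 2 ^ d (7 + x)²` for
`x = i - 1 ≥ 0`, which holds as `(8 / 7)² < 2 ≤ 2 ^ (d - 1)`.
-/

lemma sum_cast_mul_exchange {R : Type*} [CommRing R] (s : Finset ℕ) (w : ℕ → R)
    {a a' : ℕ → ℕ} {p q : ℕ} (hp : p ∈ s) (hq : q ∈ s) (hpq : p ≠ q) (haq : 2 ≤ a q)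
    (ha' : ∀ j, a' j = if j = p then a p + 1 else if j = q then a q - 2 else a j) :
    ∑ j ∈ s, (a' j : R) * w j = ∑ j ∈ s, (a j : R) * w j + (w p - 2 * w q) := by
  rw [← sub_eq_iff_eq_add', ← sum_sub_distrib,
    sum_eq_add_of_mem p q hp hq hpq fun j _ ⟨hjp, hjq⟩ => by simp [ha', hjp, hjq],
    ha' p, ha' q, if_pos rfl, if_neg hpq.symm, if_pos rfl, Nat.cast_add, Nat.cast_sub haq]
  push_cast
  ring

lemma two_mul_sq_lt_two_rpow_mul_sq {d x : ℝ} (hd : 2 ≤ d) (hx : 0 ≤ x) :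
    2 * (8 + x) ^ 2 < 2 ^ d * (7 + x) ^ 2 :=
  calc 2 * (8 + x) ^ 2 < 4 * (7 + x) ^ 2 := by nlinarith
    _ = 2 ^ (2 : ℝ) * (7 + x) ^ 2 := by norm_num
    _ ≤ 2 ^ d * (7 + x) ^ 2 := by gcongr; norm_num

lemma two_rpow_inv_mul_rpow_lt {d x : ℝ} (hd : 2 ≤ d) (hx : 0 ≤ x) :
    (2 : ℝ) ^ (1 / d) * (8 + x) ^ (2 / d) < 2 * (7 + x) ^ (2 / d) := by
  have hd0 : 0 < d := by linarith
  have root := Real.rpow_lt_rpow (by positivity) (two_mul_sq_lt_two_rpow_mul_sq hd hx)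
    (one_div_pos.mpr hd0)
  rwa [Real.mul_rpow (by norm_num) (by positivity), Real.mul_rpow (by positivity) (by positivity),
    ← Real.rpow_natCast_mul (by linarith), ← Real.rpow_natCast_mul (by linarith),
    ← Real.rpow_mul (by norm_num), mul_one_div_cancel hd0.ne', Real.rpow_one,
    Nat.cast_ofNat, mul_one_div] at root

lemma rpow_div_rpow_lt_two_mul {d x : ℝ} (hd : 2 ≤ d) (hx : 0 ≤ x) (t : ℝ) :
    (2 : ℝ) ^ ((t + 1) / d) / (7 + x) ^ (2 / d)
      < 2 * ((2 : ℝ) ^ (t / d) / (7 + (x + 1)) ^ (2 / d)) := by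
  rw [← mul_div_assoc, div_lt_div_iff₀ (by positivity) (by positivity), add_div,
    Real.rpow_add two_pos, show 7 + (x + 1) = 8 + x by ring, mul_assoc, mul_assoc 2,
    mul_left_comm 2]
  exact mul_lt_mul_of_pos_left (two_rpow_inv_mul_rpow_lt hd hx) (by positivity)

theorem exchange_move_decreases_general
    (d : ℝ) (hd : 2 ≤ d) (k : ℕ)
    (a a' : ℕ → ℕ) (i : ℕ) (hi1 : 1 ≤ i) (hik : i ≤ k) (hai : 2 ≤ a i)
    (ha' : ∀ j, a' j = if j = i - 1 then a (i - 1) + 1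
                       else if j = i then a i - 2 else a j) :
    (∑ j ∈ range (k + 1), a' j * 2 ^ (k - j) = ∑ j ∈ range (k + 1), a j * 2 ^ (k - j)) ∧
    (∑ j ∈ range (k + 1), (a' j : ℝ) * (2 : ℝ) ^ (((k : ℝ) - j) / d) / ((7 + j : ℝ)) ^ (2 / d)
      < ∑ j ∈ range (k + 1), (a j : ℝ) * (2 : ℝ) ^ (((k : ℝ) - j) / d) / ((7 + j : ℝ)) ^ (2 / d)) := by
  obtain ⟨m, rfl⟩ : ∃ m, i = m + 1 := ⟨i - 1, by omega⟩
  simp only [Nat.add_sub_cancel] at ha'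
  have hm : m ∈ range (k + 1) := mem_range.mpr (by omega)
  have hm1 : m + 1 ∈ range (k + 1) := mem_range.mpr (by omega)
  constructor
  · have hw : (2 : ℤ) ^ (k - m) = 2 * 2 ^ (k - (m + 1)) := by
      rw [show k - m = k - (m + 1) + 1 by omega, pow_succ']
    have h := sum_cast_mul_exchange (range (k + 1)) (fun j => (2 : ℤ) ^ (k - j)) hm hm1
      m.succ_ne_self.symm hai ha'
    rw [hw, sub_self, add_zero] at h
    exact_mod_cast h
  · have h := sum_cast_mul_exchange (range (k + 1))
      (fun j => (2 : ℝ) ^ (((k : ℝ) - j) / d) / ((7 + j : ℝ)) ^ (2 / d)) hm hm1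
      m.succ_ne_self.symm hai ha'
    have hlt := rpow_div_rpow_lt_two_mul hd m.cast_nonneg ((k : ℝ) - (m + 1))
    simp only [mul_div_assoc] at h ⊢
    push_cast at h
    rw [show (k : ℝ) - (m + 1) + 1 = k - m by ring] at hlt
    rw [h]
    linarith

/-- the exchange move `(a_{i-1}, a_i) ↦ (a_{i-1}+1, a_i-2)` preserves the
constraint `A = Σ a_i · 2^{k-i}` and strictly decreases
`S = Σ a_i · 2^{(k-i)/d} / (7+i)^{2/d}`, for real `d ≥ 2`. -/
theorem exchange_move_decreases
    (d : ℝ) (hd : 2 ≤ d) (k : ℕ) (hk : 1 ≤ k)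
    (a a' : ℕ → ℕ) (i : ℕ) (hi1 : 1 ≤ i) (hik : i ≤ k) (hai : 2 ≤ a i)
    (ha' : ∀ j, a' j = if j = i - 1 then a (i - 1) + 1
                       else if j = i then a i - 2 else a j) :
    (∑ j ∈ range (k + 1), a' j * 2 ^ (k - j) = ∑ j ∈ range (k + 1), a j * 2 ^ (k - j)) ∧
    (∑ j ∈ range (k + 1), (a' j : ℝ) * (2 : ℝ) ^ (((k : ℝ) - j) / d) / ((7 + j : ℝ)) ^ (2 / d)
      < ∑ j ∈ range (k + 1), (a j : ℝ) * (2 : ℝ) ^ (((k : ℝ) - j) / d) / ((7 + j : ℝ)) ^ (2 / d)) :=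
  exchange_move_decreases_general d hd k a a' i hi1 hik hai ha'
end

section
/- Let d ≥ 2 be a real number and k ≥ 2 an integer. Suppose a_0, a_1, ..., a_k are nonnegative integers with a_0·2^k + a_1·2^{k-1} + ... + a_k ≥ 2^{k-2}. Then Σ_{i=0}^{k} a_i · 2^{(k-i)/d} / (1+i)^{2/d} ≥ 2^{(k-2)/d} / 9. -/
/-!
Each coefficient contributes at least a fixed multiple of its share of the binary constraint:
since `(1 + i) ^ (2 / d) ≤ 9 * 2 ^ ((i - 2) * (1 - 1 / d))`, the `i`-th weight
`2 ^ ((k - i) / d) / (1 + i) ^ (2 / d)` is at least `2 ^ ((k - 2) / d) / 9 * 2 ^ (2 - i)`,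
and the constraint says exactly that `∑ a_i * 2 ^ (2 - i) ≥ 1`.
-/

open Finset Real

theorem three_add_two_mul_le_nine_mul_two_rpow {y : ℝ} (hy : 0 ≤ y) :
    3 + 2 * y ≤ 9 * (2 : ℝ) ^ y := by
  have hlog : 1 / 2 < log 2 := lt_trans (by norm_num) log_two_gt_d9
  have hexp : 1 + log 2 * y ≤ (2 : ℝ) ^ y := by
    rw [rpow_def_of_pos two_pos]
    linarith [add_one_le_exp (log 2 * y)]
  nlinarith

theorem one_add_rpow_two_div_le {d : ℝ} (hd : 2 ≤ d) (i : ℕ) :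
    (1 + i : ℝ) ^ (2 / d) ≤ 9 * (2 : ℝ) ^ ((i - 2) * (1 - 1 / d)) := by
  have hd0 : 0 < d := by linarith
  have hroot : (1 + i : ℝ) ^ (2 / d) ≤ 1 + i := by
    simpa using rpow_le_rpow_of_exponent_le (by simp : (1 : ℝ) ≤ 1 + i)
      ((div_le_one hd0).2 hd)
  refine hroot.trans ?_
  rcases lt_or_ge i 2 with hi | hi
  · have hi1 : (i : ℝ) ≤ 1 := by exact_mod_cast Nat.lt_succ_iff.mp hi
    have hexp : (-2 : ℝ) ≤ (i - 2) * (1 - 1 / d) := by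
      nlinarith [one_div_pos.2 hd0, (Nat.cast_nonneg i : (0 : ℝ) ≤ i)]
    have hpow : (2 : ℝ) ^ (-2 : ℝ) ≤ 2 ^ ((i - 2) * (1 - 1 / d)) :=
      rpow_le_rpow_of_exponent_le one_le_two hexp
    have hquarter : (2 : ℝ) ^ (-2 : ℝ) = 1 / 4 := by norm_num
    linarith
  · have hi2 : (2 : ℝ) ≤ i := by exact_mod_cast hi
    have hinv : 1 / d ≤ 1 / 2 := one_div_le_one_div_of_le two_pos hd
    have hexp : ((i : ℝ) - 2) / 2 ≤ (i - 2) * (1 - 1 / d) := by nlinarith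
    have hpow : (2 : ℝ) ^ (((i : ℝ) - 2) / 2) ≤ 2 ^ ((i - 2) * (1 - 1 / d)) :=
      rpow_le_rpow_of_exponent_le one_le_two hexp
    have := three_add_two_mul_le_nine_mul_two_rpow (y := ((i : ℝ) - 2) / 2) (by linarith)
    linarith

theorem two_rpow_div_nine_mul_le_weight {d : ℝ} (hd : 2 ≤ d) (k : ℝ) (i : ℕ) :
    (2 : ℝ) ^ ((k - 2) / d) / 9 * 2 ^ (2 - i : ℝ)
      ≤ (2 : ℝ) ^ ((k - i) / d) / (1 + i : ℝ) ^ (2 / d) := by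
  have hd0 : d ≠ 0 := by positivity
  have hsplit : (2 : ℝ) ^ ((k - i) / d)
      = 2 ^ ((k - 2) / d) * 2 ^ (2 - i : ℝ) * 2 ^ ((i - 2) * (1 - 1 / d)) := by
    rw [← rpow_add two_pos, ← rpow_add two_pos]
    congr 1
    field_simp
    ring
  rw [hsplit, le_div_iff₀ (by positivity)]
  calc (2 : ℝ) ^ ((k - 2) / d) / 9 * 2 ^ (2 - i : ℝ) * (1 + i : ℝ) ^ (2 / d)
      ≤ (2 : ℝ) ^ ((k - 2) / d) / 9 * 2 ^ (2 - i : ℝ) * (9 * 2 ^ ((i - 2) * (1 - 1 / d))) := by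
        gcongr
        exact one_add_rpow_two_div_le hd i
    _ = 2 ^ ((k - 2) / d) * 2 ^ (2 - i : ℝ) * 2 ^ ((i - 2) * (1 - 1 / d)) := by ring

theorem one_le_sum_mul_two_rpow {k : ℕ} {a : ℕ → ℕ}
    (hA : 2 ^ (k - 2) ≤ ∑ i ∈ range (k + 1), a i * 2 ^ (k - i)) :
    1 ≤ ∑ i ∈ range (k + 1), (a i : ℝ) * 2 ^ (2 - i : ℝ) := by
  have hscale : ∀ i ∈ range (k + 1),
      ((a i * 2 ^ (k - i) : ℕ) : ℝ) = 2 ^ ((k : ℝ) - 2) * ((a i : ℝ) * 2 ^ (2 - i : ℝ)) := by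
    intro i hi
    have hik : i ≤ k := Nat.lt_succ_iff.mp (mem_range.mp hi)
    rw [Nat.cast_mul, Nat.cast_pow, Nat.cast_ofNat, ← rpow_natCast, Nat.cast_sub hik,
      mul_left_comm, ← rpow_add two_pos]
    ring_nf
  -- `k - 2` truncates in `ℕ`, which only enlarges `2 ^ (k - 2)`
  have hlow : (2 : ℝ) ^ ((k : ℝ) - 2) ≤ ((2 ^ (k - 2) : ℕ) : ℝ) := by
    rw [Nat.cast_pow, Nat.cast_ofNat, ← rpow_natCast]
    refine rpow_le_rpow_of_exponent_le one_le_two ?_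
    rw [sub_le_iff_le_add]
    exact_mod_cast (by omega : k ≤ k - 2 + 2)
  have hsum : (2 : ℝ) ^ ((k : ℝ) - 2)
      ≤ 2 ^ ((k : ℝ) - 2) * ∑ i ∈ range (k + 1), (a i : ℝ) * 2 ^ (2 - i : ℝ) := by
    rw [mul_sum, ← sum_congr rfl hscale, ← Nat.cast_sum]
    exact hlow.trans (by exact_mod_cast hA)
  exact (le_mul_iff_one_le_right (rpow_pos_of_pos two_pos _)).1 hsum

theorem weighted_sum_lower_bound_general
    (d : ℝ) (hd : 2 ≤ d) (k : ℕ) (a : ℕ → ℕ)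
    (hA : 2 ^ (k - 2) ≤ ∑ i ∈ range (k + 1), a i * 2 ^ (k - i)) :
    (2 : ℝ) ^ (((k : ℝ) - 2) / d) / 9
      ≤ ∑ i ∈ range (k + 1), (a i : ℝ) * (2 : ℝ) ^ (((k : ℝ) - i) / d) / ((1 + i : ℝ)) ^ (2 / d) := by
  calc (2 : ℝ) ^ (((k : ℝ) - 2) / d) / 9
      ≤ 2 ^ (((k : ℝ) - 2) / d) / 9 * ∑ i ∈ range (k + 1), (a i : ℝ) * 2 ^ (2 - i : ℝ) :=
        le_mul_of_one_le_right (by positivity) (one_le_sum_mul_two_rpow hA)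
    _ = ∑ i ∈ range (k + 1), (a i : ℝ) * (2 ^ (((k : ℝ) - 2) / d) / 9 * 2 ^ (2 - i : ℝ)) := by
        rw [mul_sum]
        exact sum_congr rfl fun i _ => by ring
    _ ≤ ∑ i ∈ range (k + 1), (a i : ℝ) * (2 ^ (((k : ℝ) - i) / d) / (1 + i : ℝ) ^ (2 / d)) := by
        gcongr
        exact two_rpow_div_nine_mul_le_weight hd k i
    _ = _ := by simp only [mul_div_assoc]

/-- if nonnegative integers `a_0, …, a_k` satisfy
`Σ a_i · 2^{k-i} ≥ 2^{k-2}`, then for real `d ≥ 2`,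
`Σ a_i · 2^{(k-i)/d} / (1+i)^{2/d} ≥ 2^{(k-2)/d} / 9`. -/
theorem weighted_sum_lower_bound
    (d : ℝ) (hd : 2 ≤ d) (k : ℕ) (hk : 2 ≤ k) (a : ℕ → ℕ)
    (hA : 2 ^ (k - 2) ≤ ∑ i ∈ range (k + 1), a i * 2 ^ (k - i)) :
    (2 : ℝ) ^ (((k : ℝ) - 2) / d) / 9
      ≤ ∑ i ∈ range (k + 1), (a i : ℝ) * (2 : ℝ) ^ (((k : ℝ) - i) / d) / ((1 + i : ℝ)) ^ (2 / d) :=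
  weighted_sum_lower_bound_general d hd k a hA
end

section
/- Let (X, dist, μ) be an Ahlfors (c_1, c_2, d)-regular metric measure space, and let η > 0, s ≥ 1, α > 0. Suppose S_1, ..., S_K ⊆ X are η-round Borel sets such that every point of X belongs to at most s of the sets S_i, and there exists x ∈ X with max_i dist(x, S_i) < α · min_i diam(S_i). Then K ≤ s · (c_2/(c_1 η)) · (1+2α)^d. -/
/-!
Let `D` be the smallest of the diameters and pick `y i ∈ S i` with `dist x (y i) < α D`.
For `ρ < D / 2` no `S i` fits into the ball `B(y i, ρ)`, so roundness and lower regularity give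
`μ (S i ∩ B(y i, ρ)) ≥ η c₁ ρ^d`; the case `ρ = D / 2` is excluded since `S i` may lie in
`B(y i, D / 2)`. These balls all lie in `B(x, (1 + 2α) D / 2)`, and since the
`S i` overlap at most `s` times, summing gives `K η c₁ ρ^d ≤ s c₂ ((1 + 2α) D / 2)^d`.
Letting `ρ → D / 2` yields the bound.
-/

open Metric MeasureTheory ENNReal Filter Set

section

variable {X : Type*} [MeasurableSpace X]

theorem sum_measure_le_mul_measure_univ {ι : Type*} [Fintype ι] (ν : Measure X)
    {S : ι → Set X} (hmeas : ∀ i, MeasurableSet (S i)) {s : ℕ}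
    (hmult : ∀ x, {i | x ∈ S i}.ncard ≤ s) :
    ∑ i, ν (S i) ≤ s * ν univ := by
  classical
  calc ∑ i, ν (S i) = ∫⁻ x, ∑ i, (S i).indicator 1 x ∂ν := by
        rw [lintegral_finsetSum _ fun i _ => measurable_one.indicator (hmeas i)]
        simp only [lintegral_indicator_one (hmeas _)]
    _ ≤ ∫⁻ _, (s : ℝ≥0∞) ∂ν := lintegral_mono fun x => by
        simpa [Set.indicator_apply, Finset.sum_boole, ← Set.ncard_coe_finset] using hmult x
    _ = s * ν univ := lintegral_const _

variable [PseudoMetricSpace X]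

def IsRound (μ : Measure X) (η : ℝ) (S : Set X) : Prop :=
  ∀ y ∈ closure S, ∀ ρ : ℝ, ¬ S ⊆ closedBall y ρ →
    ENNReal.ofReal η * μ (closedBall y ρ) ≤ μ (S ∩ closedBall y ρ)

theorem IsRound.ofReal_mul_measure_closedBall_le {μ : Measure X} {η : ℝ} {S : Set X}
    (hS : IsRound μ η S) {y : X} (hy : y ∈ S) {ρ : ℝ} (hρ : 0 ≤ ρ) (hdiam : 2 * ρ < diam S) :
    ENNReal.ofReal η * μ (closedBall y ρ) ≤ μ (S ∩ closedBall y ρ) :=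
  hS y (subset_closure hy) ρ fun hsub => hdiam.not_ge (diam_le_of_subset_closedBall hρ hsub)

theorem card_mul_le_of_isRound {μ : Measure X} {η : ℝ} (hη : 0 ≤ η) {ι : Type*} [Fintype ι]
    {S : ι → Set X} (hmeas : ∀ i, MeasurableSet (S i)) {s : ℕ}
    (hmult : ∀ x, {i | x ∈ S i}.ncard ≤ s) (hround : ∀ i, IsRound μ η (S i))
    {y : ι → X} (hy : ∀ i, y i ∈ S i) {x : X} {ρ R : ℝ} (hρ : 0 ≤ ρ)
    (hdiam : ∀ i, 2 * ρ < diam (S i)) (hball : ∀ i, ρ + dist (y i) x ≤ R) {m M : ℝ}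
    (hM : 0 ≤ M) (hlower : ∀ i, ENNReal.ofReal m ≤ μ (closedBall (y i) ρ))
    (hupper : μ (closedBall x R) ≤ ENNReal.ofReal M) :
    Fintype.card ι * η * m ≤ s * M := by
  have hterm : ∀ i, ENNReal.ofReal (η * m) ≤ μ.restrict (closedBall x R) (S i) := fun i =>
    calc ENNReal.ofReal (η * m) ≤ ENNReal.ofReal η * μ (closedBall (y i) ρ) := by
          rw [ofReal_mul hη]; gcongr; exact hlower i
      _ ≤ μ (S i ∩ closedBall (y i) ρ) :=
        (hround i).ofReal_mul_measure_closedBall_le (hy i) hρ (hdiam i)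
      _ ≤ μ.restrict (closedBall x R) (S i) := by
        rw [Measure.restrict_apply (hmeas i)]
        exact measure_mono (inter_subset_inter_right _ (closedBall_subset_closedBall' (hball i)))
  have hsum : ENNReal.ofReal (Fintype.card ι * η * m) ≤ ENNReal.ofReal (s * M) :=
    calc ENNReal.ofReal (Fintype.card ι * η * m) = ∑ _i : ι, ENNReal.ofReal (η * m) := by
          rw [mul_assoc, ofReal_mul (Nat.cast_nonneg _)]; simp
      _ ≤ ∑ i, μ.restrict (closedBall x R) (S i) := Finset.sum_le_sum fun i _ => hterm i
      _ ≤ s * μ (closedBall x R) := by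
        simpa using sum_measure_le_mul_measure_univ (μ.restrict (closedBall x R)) hmeas hmult
      _ ≤ ENNReal.ofReal (s * M) := by
        rw [ofReal_mul (Nat.cast_nonneg _), ofReal_natCast]; gcongr
  exact (ofReal_le_ofReal_iff (by positivity)).1 hsum

theorem measure_closedBall_le_of_forall_le_ediam {μ : Measure X} {c d : ℝ} (hc : 0 ≤ c)
    (hd : 0 ≤ d) (h : ∀ x R, 0 ≤ R → ENNReal.ofReal R ≤ ediam (univ : Set X) →
      μ (closedBall x R) ≤ ENNReal.ofReal (c * R ^ d))
    (x : X) {R : ℝ} (hR : 0 ≤ R) : μ (closedBall x R) ≤ ENNReal.ofReal (c * R ^ d) := by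
  rcases le_or_gt (ENNReal.ofReal R) (ediam (univ : Set X)) with hle | hlt
  · exact h x R hR hle
  have hfin : ediam (univ : Set X) ≠ ⊤ := (hlt.trans ofReal_lt_top).ne
  have hbdd : Bornology.IsBounded (univ : Set X) := isBounded_iff_ediam_ne_top.2 hfin
  have hD : ENNReal.ofReal (diam (univ : Set X)) = ediam (univ : Set X) :=
    ofReal_toReal hfin
  have hDR : diam (univ : Set X) ≤ R := by
    rw [← hD] at hlt; exact (ofReal_lt_ofReal_iff_of_nonneg diam_nonneg).1 hlt |>.le
  calc μ (closedBall x R) ≤ μ (closedBall x (diam univ)) := measure_mono fun z _ =>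
        dist_le_diam_of_mem hbdd (mem_univ z) (mem_univ x)
    _ ≤ ENNReal.ofReal (c * diam (univ : Set X) ^ d) := h x _ diam_nonneg hD.le
    _ ≤ ENNReal.ofReal (c * R ^ d) := by gcongr

end

theorem le_of_forall_mul_rpow_le {a b r d : ℝ} (hr : 0 < r)
    (h : ∀ ρ ∈ Ioo 0 r, a * ρ ^ d ≤ b * r ^ d) : a ≤ b := by
  have hlim : a * r ^ d ≤ b * r ^ d :=
    le_of_tendsto (((Real.continuousAt_rpow_const r d (.inl hr.ne')).const_mul a).mono_left
      nhdsWithin_le_nhds) (eventually_of_mem (Ioo_mem_nhdsLT hr) h)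
  exact le_of_mul_le_mul_right hlim (by positivity)

theorem round_sets_near_point_bound_general
    {X : Type*} [MetricSpace X] [MeasurableSpace X] (μ : Measure X)
    (c1 c2 d η α : ℝ) (s K : ℕ)
    (hc1 : 0 < c1) (hc2 : 0 < c2) (hd : 0 < d) (hη : 0 < η) (hα : 0 < α)
    (hK : 1 ≤ K)
    (hreg : ∀ (x : X) (R : ℝ), 0 ≤ R →
      ENNReal.ofReal R ≤ EMetric.diam (Set.univ : Set X) →
      ENNReal.ofReal (c1 * R ^ d) ≤ μ (closedBall x R) ∧
      μ (closedBall x R) ≤ ENNReal.ofReal (c2 * R ^ d))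
    (S : Fin K → Set X) (hmeas : ∀ i, MeasurableSet (S i))
    (hround : ∀ i, ∀ y ∈ closure (S i), ∀ ρ : ℝ, ¬ S i ⊆ closedBall y ρ →
      ENNReal.ofReal η * μ (closedBall y ρ) ≤ μ (S i ∩ closedBall y ρ))
    (hmult : ∀ x : X, ({i | x ∈ S i} : Set (Fin K)).ncard ≤ s)
    (x : X)
    (hnear : ∀ i j : Fin K, infDist x (S i) < α * diam (S j)) :
    (K : ℝ) ≤ s * (c2 / (c1 * η)) * (1 + 2 * α) ^ d := by
  obtain ⟨i₀, -, hmin⟩ := Finset.exists_min_image Finset.univ (fun i => diam (S i))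
    ⟨⟨0, hK⟩, Finset.mem_univ _⟩
  set D := diam (S i₀) with hD_def
  have hD : 0 < D := pos_of_mul_pos_right (infDist_nonneg.trans_lt (hnear i₀ i₀)) hα.le
  have hnonempty : ∀ i, (S i).Nonempty := fun i => nonempty_iff_ne_empty.2 fun h => by
    simpa [h] using hD.trans_le (hmin i (Finset.mem_univ i))
  choose y hyS hyx using fun i => (infDist_lt_iff (hnonempty i)).1 (hnear i i₀)
  rw [← hD_def] at hyx
  have hD_le : ENNReal.ofReal D ≤ ediam (univ : Set X) :=
    ofReal_toReal_le.trans (ediam_mono (subset_univ _))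
  have hbound : ∀ ρ ∈ Ioo 0 (D / 2),
      (K * η * c1) * ρ ^ d ≤ (s * c2 * (1 + 2 * α) ^ d) * (D / 2) ^ d := by
    rintro ρ ⟨hρ, hρD⟩
    rw [mul_assoc _ _ ((D / 2) ^ d), ← Real.mul_rpow (by positivity) (by positivity)]
    simpa only [Fintype.card_fin, mul_assoc] using
      card_mul_le_of_isRound (R := (1 + 2 * α) * (D / 2)) hη.le hmeas hmult hround hyS hρ.le
      (fun i => by linarith [hmin i (Finset.mem_univ i)])
      (fun i => by linarith [dist_comm x (y i) ▸ hyx i]) (by positivity)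
      (fun i => (hreg (y i) ρ hρ.le ((ofReal_le_ofReal (by linarith)).trans hD_le)).1)
      (measure_closedBall_le_of_forall_le_ediam hc2.le hd.le
        (fun z R hR hRd => (hreg z R hR hRd).2) x (by positivity))
  have hcoef := le_of_forall_mul_rpow_le (by positivity) hbound
  rw [show (s : ℝ) * (c2 / (c1 * η)) * (1 + 2 * α) ^ d = s * c2 * (1 + 2 * α) ^ d / (c1 * η) by
    ring, le_div_iff₀ (by positivity)]
  linarith

/-- in an Ahlfors `(c₁,c₂,d)`-regular space, at most
`s·(c₂/(c₁η))·(1+2α)^d` pairwise boundedly-overlapping `η`-round sets can all come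
`α`-close (relative to their diameters) to a single point `x`. -/
theorem round_sets_near_point_bound
    {X : Type*} [MetricSpace X] [MeasurableSpace X] (μ : Measure X)
    (c1 c2 d η α : ℝ) (s K : ℕ)
    (hc1 : 0 < c1) (hc2 : 0 < c2) (hd : 0 < d) (hη : 0 < η) (hα : 0 < α)
    (hs : 1 ≤ s) (hK : 1 ≤ K)
    (hreg : ∀ (x : X) (R : ℝ), 0 ≤ R →
      ENNReal.ofReal R ≤ EMetric.diam (Set.univ : Set X) →
      ENNReal.ofReal (c1 * R ^ d) ≤ μ (closedBall x R) ∧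
      μ (closedBall x R) ≤ ENNReal.ofReal (c2 * R ^ d))
    (S : Fin K → Set X) (hmeas : ∀ i, MeasurableSet (S i))
    (hround : ∀ i, ∀ y ∈ closure (S i), ∀ ρ : ℝ, ¬ S i ⊆ closedBall y ρ →
      ENNReal.ofReal η * μ (closedBall y ρ) ≤ μ (S i ∩ closedBall y ρ))
    (hmult : ∀ x : X, ({i | x ∈ S i} : Set (Fin K)).ncard ≤ s)
    (x : X)
    (hnear : ∀ i j : Fin K, infDist x (S i) < α * diam (S j)) :
    (K : ℝ) ≤ s * (c2 / (c1 * η)) * (1 + 2 * α) ^ d :=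
  round_sets_near_point_bound_general μ c1 c2 d η α s K hc1 hc2 hd hη hα hK hreg S hmeas hround
    hmult x hnear
end

section
/- Let f : X → Y be an η-quasisymmetric map. If S ⊆ X is a τ-quasi-ball (i.e., there exist x ∈ X and r > 0 with B(x,r) ⊆ S ⊆ B(x, τr)), then f(S) is a 2η(τ)-quasi-ball in Y. -/
/-!
Put `y = f x`. A point `w ∉ S` lies outside `B(x, r)`, so every `s ∈ S` satisfies
`d(x, s) ≤ τ d(x, w)` and quasisymmetry gives `d(y, f s) ≤ η(τ) d(y, f w)`: by surjectivity,
`f(S)` is a bounded neighbourhood of `y` all of whose points are `η(τ)` times closer to `y`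
than any point outside it. If `L` is the supremum of `d(y, ·)` on `f(S)`, the ball of radius
`L / (2η(τ))` about `y` therefore lies in `f(S)`, while `f(S) ⊆ B(y, L)`. When `L = 0` one uses
instead that `f(S)` is a neighbourhood of `y`, which holds because a quasisymmetric map cannot
bring points from outside `B(x, r)` arbitrarily close to `y`.
-/

open Metric Bornology Topology

section

variable {X Y : Type*} [MetricSpace X] [MetricSpace Y]

def IsQuasisymmetric (η : ℝ → ℝ) (f : X → Y) : Prop :=
  ∀ x y z : X, x ≠ z → dist (f x) (f y) ≤ η (dist x y / dist x z) * dist (f x) (f z)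

def IsQuasiBall (τ : ℝ) (S : Set X) : Prop :=
  ∃ (x : X) (r : ℝ), 0 < r ∧ closedBall x r ⊆ S ∧ S ⊆ closedBall x (τ * r)

theorem isQuasiBall_of_dist_le_mul_dist_compl {y : Y} {A : Set Y} {k : ℝ} (hA : A ∈ 𝓝 y)
    (hbdd : IsBounded A) (hk : 0 < k) (hsep : ∀ a ∈ A, ∀ b ∉ A, dist y a ≤ k * dist y b) :
    IsQuasiBall (2 * k) A := by
  obtain ⟨ε, hε, hεA⟩ := nhds_basis_closedBall.mem_iff.1 hA
  obtain ⟨R, hR⟩ := hbdd.subset_closedBall y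
  have hL : BddAbove (dist y '' A) :=
    ⟨R, Set.forall_mem_image.2 fun a ha => mem_closedBall'.1 (hR ha)⟩
  set L := sSup (dist y '' A)
  refine ⟨y, max ε (L / (2 * k)), lt_max_of_lt_left hε, fun b hb => ?_, fun a ha => ?_⟩
  · by_contra hbA
    have hεb : ε < dist y b := lt_of_not_ge fun h => hbA (hεA (mem_closedBall'.2 h))
    have hLb : L ≤ k * dist y b :=
      csSup_le ⟨_, Set.mem_image_of_mem _ (mem_of_mem_nhds hA)⟩
        (Set.forall_mem_image.2 fun a ha => hsep a ha b hbA)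
    rcases le_max_iff.1 (mem_closedBall'.1 hb) with h | h
    · linarith
    · rw [le_div_iff₀ (by positivity)] at h
      nlinarith
  · rw [mem_closedBall']
    calc dist y a ≤ L := le_csSup hL (Set.mem_image_of_mem _ ha)
      _ = 2 * k * (L / (2 * k)) := by field_simp
      _ ≤ 2 * k * max ε (L / (2 * k)) := by gcongr; exact le_max_right _ _

namespace IsQuasisymmetric

variable {η : ℝ → ℝ} {f : X → Y}

theorem dist_le_mul_dist (hf : IsQuasisymmetric η f) (hη : Monotone η) {x y z : X} {t : ℝ}
    (hxz : x ≠ z) (h : dist x y ≤ t * dist x z) :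
    dist (f x) (f y) ≤ η t * dist (f x) (f z) := by
  refine (hf x y z hxz).trans (mul_le_mul_of_nonneg_right (hη ?_) dist_nonneg)
  rwa [div_le_iff₀ (dist_pos.2 hxz)]

theorem isBounded_image (hf : IsQuasisymmetric η f) (hη : Monotone η) {S : Set X}
    (hS : IsBounded S) : IsBounded (f '' S) := by
  rcases subsingleton_or_nontrivial X with hX | hX
  · exact (S.toFinite.image f).isBounded
  obtain ⟨x, z, hxz⟩ := exists_pair_ne X
  obtain ⟨R, hR⟩ := hS.subset_closedBall x
  refine (isBounded_closedBall (x := f x) (r := η (R / dist x z) * dist (f x) (f z))).subset ?_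
  rintro _ ⟨s, hs, rfl⟩
  refine mem_closedBall'.2 (hf.dist_le_mul_dist hη hxz ?_)
  rw [div_mul_cancel₀ _ (dist_ne_zero.2 hxz)]
  exact mem_closedBall'.1 (hR hs)

theorem image_mem_nhds (hf : IsQuasisymmetric η f) (hη : Monotone η)
    (hsurj : Function.Surjective f) {S : Set X} {x : X} (hS : S ∈ 𝓝 x) : f '' S ∈ 𝓝 (f x) := by
  rcases subsingleton_or_nontrivial Y with hY | hY
  · rw [Subsingleton.eq_univ_of_nonempty ⟨f x, Set.mem_image_of_mem f (mem_of_mem_nhds hS)⟩]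
    exact Filter.univ_mem
  obtain ⟨r, hr, hrS⟩ := nhds_basis_closedBall.mem_iff.1 hS
  obtain ⟨z, hz⟩ := hsurj.exists.1 (exists_ne (f x))
  -- `max _ 1` keeps the constant positive without assuming `η > 0`
  set c := max (η (dist x z / r)) 1
  have hc : 0 < c := lt_max_of_lt_right one_pos
  refine mem_nhds_iff.2 ⟨dist (f x) (f z) / c, div_pos (dist_pos.2 hz.symm) hc, fun b hb => ?_⟩
  obtain ⟨w, rfl⟩ := hsurj b
  by_contra hw
  have hrw : r < dist x w :=
    lt_of_not_ge fun h => hw (Set.mem_image_of_mem f (hrS (mem_closedBall'.2 h)))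
  have hxw : x ≠ w := dist_pos.1 (hr.trans hrw)
  have hzw : dist (f x) (f z) ≤ c * dist (f x) (f w) := by
    refine (hf.dist_le_mul_dist hη hxw ?_).trans
      (mul_le_mul_of_nonneg_right (le_max_left _ _) dist_nonneg)
    rw [div_mul_eq_mul_div, le_div_iff₀ hr]
    exact mul_le_mul_of_nonneg_left hrw.le dist_nonneg
  rw [mem_ball', lt_div_iff₀ hc] at hb
  linarith

theorem dist_le_mul_dist_of_mem_of_notMem (hf : IsQuasisymmetric η f) (hη : Monotone η)
    {S : Set X} {x : X} {r τ : ℝ} (hr : 0 ≤ r) (hτ : 0 ≤ τ) (h1 : closedBall x r ⊆ S)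
    (h2 : S ⊆ closedBall x (τ * r)) {s w : X} (hs : s ∈ S) (hw : w ∉ S) :
    dist (f x) (f s) ≤ η τ * dist (f x) (f w) := by
  have hrw : r < dist x w := lt_of_not_ge fun h => hw (h1 (mem_closedBall'.2 h))
  refine hf.dist_le_mul_dist hη (dist_pos.1 (hr.trans_lt hrw)) ?_
  calc dist x s ≤ τ * r := mem_closedBall'.1 (h2 hs)
    _ ≤ τ * dist x w := by gcongr

end IsQuasisymmetric

end

theorem quasisymmetric_image_quasiball_general
    {X Y : Type*} [MetricSpace X] [MetricSpace Y] (f : X → Y)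
    (hsurj : Function.Surjective f)
    (η : ℝ → ℝ)
    (hη_mono : StrictMono η) (hη0 : η 0 = 0)
    (hqs : ∀ x y z : X, x ≠ z →
      dist (f x) (f y) ≤ η (dist x y / dist x z) * dist (f x) (f z))
    (τ : ℝ) (hτ : 1 ≤ τ) (S : Set X) (x : X) (r : ℝ) (hr : 0 < r)
    (h1 : closedBall x r ⊆ S) (h2 : S ⊆ closedBall x (τ * r)) :
    ∃ (y : Y) (ρ : ℝ), 0 < ρ ∧
      closedBall y ρ ⊆ f '' S ∧ f '' S ⊆ closedBall y (2 * η τ * ρ) := by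
  have hf : IsQuasisymmetric η f := hqs
  have hη := hη_mono.monotone
  have hτ0 : 0 < τ := one_pos.trans_le hτ
  refine isQuasiBall_of_dist_le_mul_dist_compl (y := f x)
    (hf.image_mem_nhds hη hsurj (Filter.mem_of_superset (closedBall_mem_nhds x hr) h1))
    (hf.isBounded_image hη (isBounded_closedBall.subset h2)) (hη0 ▸ hη_mono hτ0) ?_
  rintro _ ⟨s, hs, rfl⟩ b hb
  obtain ⟨w, rfl⟩ := hsurj b
  exact hf.dist_le_mul_dist_of_mem_of_notMem hη hr.le hτ0.le h1 h2 hs fun hw => hb ⟨w, hw, rfl⟩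

/-- Tyson: the image of a `τ`-quasi-ball under an `η`-quasisymmetric
(surjective) map is a `2η(τ)`-quasi-ball. -/
theorem quasisymmetric_image_quasiball
    {X Y : Type*} [MetricSpace X] [MetricSpace Y] (f : X → Y)
    (hsurj : Function.Surjective f)
    (η : ℝ → ℝ)
    (hη_mono : StrictMono η) (hη_cont : Continuous η) (hη0 : η 0 = 0)
    (hη_surj : ∀ t : ℝ, 0 ≤ t → ∃ u : ℝ, 0 ≤ u ∧ η u = t)
    (hqs : ∀ x y z : X, x ≠ z →
      dist (f x) (f y) ≤ η (dist x y / dist x z) * dist (f x) (f z))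
    (τ : ℝ) (hτ : 1 ≤ τ) (S : Set X) (x : X) (r : ℝ) (hr : 0 < r)
    (h1 : closedBall x r ⊆ S) (h2 : S ⊆ closedBall x (τ * r)) :
    ∃ (y : Y) (ρ : ℝ), 0 < ρ ∧
      closedBall y ρ ⊆ f '' S ∧ f '' S ⊆ closedBall y (2 * η τ * ρ) :=
  quasisymmetric_image_quasiball_general f hsurj η hη_mono hη0 hqs τ hτ S x r hr h1 h2
end

section
/- Let V be a finite set with |V| = n, and let P be a bi-infinite hierarchical system of partitions {P_m : m ∈ ℤ} of a set X containing V, where each P_m refines P_{m+1}, and suppose there is m_0 such that every cell of P_{m_0} contains at most one point of V. Fix an integer s ≥ 1 and for a cell C ∈ P_m, define lev(C,m) as the largest j ∈ ℕ such that |(V ∩ C) \ C'| ≥ 2^j for all C' ∈ P_{m−s}. Then for every j ≥ 0, the number of pairs (C,m) with C ∈ P_m and lev(C,m) = j is at most 2s·n/2^j. -/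
open Set

/-!
Charge a pair `(C, m)` of level `j` to the points `v ∈ (V ∩ C) \ C'`, where `C' ∈ P (m - s)`
witnesses that the level is not `j + 1`. There are at least `2 ^ j` of them, and for each, the
number `N k = cellCount V P k v` of points of `V` in the cell of `v` at level `k` satisfies
`N (m - s) < 2 ^ (j + 1)` and `N (m - s) + 2 ^ j ≤ N m`. As `N` is monotone, two such times
`m₁ < m₂` in the same residue class mod `s` have `N (m₁ - s) < 2 ^ j ≤ N (m₂ - s)`, so each point
is charged at most twice per residue class, `2 s` times in all.
-/

def jumpTimes (f : ℤ → ℕ) (s a : ℕ) : Set ℤ :=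
  {m | a + f (m - s) ≤ f m ∧ f (m - s) < 2 * a}

@[simp]
lemma jumpTimes_zero (f : ℤ → ℕ) (a : ℕ) : jumpTimes f 0 a = ∅ := by
  refine eq_empty_of_forall_notMem fun m ⟨h₁, h₂⟩ => ?_
  rw [Nat.cast_zero, sub_zero] at h₁ h₂
  omega

namespace Monotone

variable {f : ℤ → ℕ} {s a : ℕ}

lemma lt_le_of_mem_jumpTimes (hf : Monotone f) {m₁ m₂ : ℤ} (h₁ : m₁ ∈ jumpTimes f s a)
    (h₂ : m₂ ∈ jumpTimes f s a) (hm : m₁ + s ≤ m₂) :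
    f (m₁ - s) < a ∧ a ≤ f (m₂ - s) := by
  have : f m₁ ≤ f (m₂ - s) := hf (by omega)
  obtain ⟨h₁, -⟩ := h₁
  obtain ⟨-, h₂⟩ := h₂
  omega

lemma injOn_jumpTimes (hf : Monotone f) :
    InjOn (fun m : ℤ => ((m : ZMod s), decide (a ≤ f (m - s)))) (jumpTimes f s a) := by
  suffices ∀ m₁ ∈ jumpTimes f s a, ∀ m₂ ∈ jumpTimes f s a, m₁ < m₂ →
      (m₁ : ZMod s) = m₂ → (a ≤ f (m₁ - s) ↔ a ≤ f (m₂ - s)) → False by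
    intro m₁ h₁ m₂ h₂ heq
    simp only [Prod.mk.injEq, decide_eq_decide] at heq
    rcases lt_trichotomy m₁ m₂ with hlt | heq' | hgt
    · exact (this m₁ h₁ m₂ h₂ hlt heq.1 heq.2).elim
    · exact heq'
    · exact (this m₂ h₂ m₁ h₁ hgt heq.1.symm heq.2.symm).elim
  intro m₁ h₁ m₂ h₂ hlt hres hflag
  have hdvd := (ZMod.intCast_eq_intCast_iff_dvd_sub m₁ m₂ s).1 hres
  have hs : (s : ℤ) ≤ m₂ - m₁ := by
    rcases Nat.eq_zero_or_pos s with rfl | hs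
    · omega
    · exact Int.le_of_dvd (by omega) hdvd
  have := hf.lt_le_of_mem_jumpTimes h₁ h₂ (by omega)
  exact absurd (hflag.2 this.2) (by omega)

theorem finite_jumpTimes (hf : Monotone f) : (jumpTimes f s a).Finite := by
  rcases Nat.eq_zero_or_pos s with rfl | hs
  · simp
  have : NeZero s := ⟨hs.ne'⟩
  exact Finite.of_finite_image (toFinite _) hf.injOn_jumpTimes

theorem ncard_jumpTimes_le (hf : Monotone f) : (jumpTimes f s a).ncard ≤ 2 * s := by
  rcases Nat.eq_zero_or_pos s with rfl | hs
  · simp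
  have : NeZero s := ⟨hs.ne'⟩
  calc (jumpTimes f s a).ncard
      = (_ '' jumpTimes f s a).ncard := hf.injOn_jumpTimes.ncard_image.symm
    _ ≤ Nat.card (ZMod s × Bool) := ncard_le_card _
    _ = 2 * s := by simp [mul_comm]

end Monotone

lemma Set.Finite.finite_and_ncard_mul_le_of_le_ncard_fiber {α β : Type*} {W : Set α}
    (hW : W.Finite) (g : α → β) {S : Set β} {k : ℕ} (hk : 0 < k)
    (hS : ∀ b ∈ S, k ≤ {a ∈ W | g a = b}.ncard) : S.Finite ∧ S.ncard * k ≤ W.ncard := by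
  have hSW : S ⊆ g '' W := fun b hb => by
    obtain ⟨a, ha, rfl⟩ := nonempty_of_ncard_ne_zero (hk.trans_le (hS b hb)).ne'
    exact mem_image_of_mem g ha
  have hSfin : S.Finite := (hW.image g).subset hSW
  refine ⟨hSfin, ?_⟩
  classical
  have := Finset.card_mul_le_card_mul (fun b a => g a = b) (s := hSfin.toFinset)
    (t := hW.toFinset) (m := k) (n := 1) (fun b hb => ?_) (fun a _ => ?_)
  · rwa [ncard_eq_toFinset_card S hSfin, ncard_eq_toFinset_card W hW, mul_one] at *
  · rw [← ncard_coe_finset, Finset.coe_bipartiteAbove]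
    simpa only [Finite.mem_toFinset] using hS b (hSfin.mem_toFinset.1 hb)
  · refine Finset.card_le_one.2 fun b₁ hb₁ b₂ hb₂ => ?_
    rw [Finset.mem_bipartiteBelow] at hb₁ hb₂
    exact hb₁.2.symm.trans hb₂.2

lemma Finset.finite_and_ncard_setOf_fst_mem_le {α β : Type*} (V : Finset α) {J : α → Set β}
    {k : ℕ} (hJ : ∀ v ∈ V, (J v).Finite ∧ (J v).ncard ≤ k) :
    {q : α × β | q.1 ∈ V ∧ q.2 ∈ J q.1}.Finite ∧
      {q : α × β | q.1 ∈ V ∧ q.2 ∈ J q.1}.ncard ≤ V.card * k := by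
  have hunion : {q : α × β | q.1 ∈ V ∧ q.2 ∈ J q.1} = ⋃ v ∈ V, Prod.mk v '' J v := by
    ext ⟨v, m⟩
    simp [and_comm]
  rw [hunion]
  refine ⟨V.finite_toSet.biUnion fun v hv => ((hJ v hv).1.image _), ?_⟩
  calc (⋃ v ∈ V, Prod.mk v '' J v).ncard ≤ ∑ v ∈ V, (Prod.mk v '' J v).ncard :=
        V.set_ncard_biUnion_le _
    _ ≤ ∑ _v ∈ V, k := Finset.sum_le_sum fun v hv =>
        (ncard_image_le (hJ v hv).1).trans (hJ v hv).2
    _ = V.card * k := by rw [Finset.sum_const, smul_eq_mul]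

section Hierarchy

variable {X : Type*} {P : ℤ → Set (Set X)}

def cell (P : ℤ → Set (Set X)) (m : ℤ) (x : X) : Set X := ⋃₀ {C ∈ P m | x ∈ C}

lemma cell_eq_of_mem {m : ℤ} {x : X} (hx : ∃! C, C ∈ P m ∧ x ∈ C) {C : Set X} (hC : C ∈ P m)
    (hxC : x ∈ C) : cell P m x = C := by
  refine subset_antisymm (sUnion_subset fun D hD => ?_) (subset_sUnion_of_mem ⟨hC, hxC⟩)
  rw [hx.unique hD ⟨hC, hxC⟩]

variable (hpart : ∀ m : ℤ, ∀ x : X, ∃! C, C ∈ P m ∧ x ∈ C)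
include hpart

lemma cell_mem (m : ℤ) (x : X) : cell P m x ∈ P m := by
  obtain ⟨C, ⟨hC, hxC⟩, -⟩ := hpart m x
  rwa [cell_eq_of_mem (hpart m x) hC hxC]

lemma mem_cell (m : ℤ) (x : X) : x ∈ cell P m x := by
  obtain ⟨C, ⟨hC, hxC⟩, -⟩ := hpart m x
  rwa [cell_eq_of_mem (hpart m x) hC hxC]

lemma cell_eq_cell_of_mem {m : ℤ} {x y : X} (hy : y ∈ cell P m x) : cell P m y = cell P m x :=
  cell_eq_of_mem (hpart m y) (cell_mem hpart m x) hy

lemma monotone_cell (href : ∀ m : ℤ, ∀ C ∈ P m, ∃ C' ∈ P (m + 1), C ⊆ C') (x : X) :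
    Monotone fun m => cell P m x := by
  refine monotone_int_of_le_succ fun m => ?_
  obtain ⟨C', hC', hsub⟩ := href m _ (cell_mem hpart m x)
  rwa [cell_eq_of_mem (hpart (m + 1) x) hC' (hsub (mem_cell hpart m x))]

noncomputable def cellCount (V : Finset X) (P : ℤ → Set (Set X)) (m : ℤ) (v : X) : ℕ :=
  ((V : Set X) ∩ cell P m v).ncard

variable (href : ∀ m : ℤ, ∀ C ∈ P m, ∃ C' ∈ P (m + 1), C ⊆ C') (V : Finset X)
include href

lemma monotone_cellCount (v : X) : Monotone fun m => cellCount V P m v :=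
  fun _ _ h => ncard_le_ncard (inter_subset_inter_right _ (monotone_cell hpart href v h))
    (V.finite_toSet.inter_of_left _)

section

variable {m m' : ℤ} (hm : m' ≤ m) {C : Set X} (hC : C ∈ P m) {v : X}
include hm hC

lemma add_cellCount_le (hv : v ∈ C) {k : ℕ}
    (hk : ∀ D ∈ P m', k ≤ (((V : Set X) ∩ C) \ D).ncard) :
    k + cellCount V P m' v ≤ cellCount V P m v := by
  have hCv : cell P m v = C := cell_eq_of_mem (hpart m v) hC hv
  have hsub : cell P m' v ⊆ C := hCv ▸ monotone_cell hpart href v hm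
  have hsplit := ncard_inter_add_ncard_sdiff_eq_ncard ((V : Set X) ∩ C) (cell P m' v)
    (V.finite_toSet.inter_of_left _)
  rw [inter_assoc, inter_eq_right.2 hsub] at hsplit
  have := hk _ (cell_mem hpart m' v)
  unfold cellCount
  rw [hCv]
  omega

lemma cellCount_le_ncard_sdiff {C' : Set X} (hC' : C' ∈ P m') (hv : v ∈ C \ C') :
    cellCount V P m' v ≤ (((V : Set X) ∩ C) \ C').ncard := by
  have hsub : cell P m' v ⊆ C :=
    cell_eq_of_mem (hpart m v) hC hv.1 ▸ monotone_cell hpart href v hm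
  refine ncard_le_ncard (fun x ⟨hxV, hx⟩ => ⟨⟨hxV, hsub hx⟩, fun hxC' => hv.2 ?_⟩)
    ((V.finite_toSet.inter_of_left _).sdiff)
  rw [← cell_eq_of_mem (hpart m' x) hC' hxC', cell_eq_cell_of_mem hpart hx]
  exact mem_cell hpart m' v

end

lemma exists_subset_jumpTimes_of_isGreatest {s j : ℕ} {m : ℤ} {C : Set X} (hC : C ∈ P m)
    (hj : IsGreatest {j : ℕ | ∀ C' ∈ P (m - s), 2 ^ j ≤ (((V : Set X) ∩ C) \ C').ncard} j) :
    ∃ T ⊆ (V : Set X) ∩ C, 2 ^ j ≤ T.ncard ∧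
      ∀ v ∈ T, m ∈ jumpTimes (fun k => cellCount V P k v) s (2 ^ j) := by
  obtain ⟨hlow, hmax⟩ := hj
  obtain ⟨C', hC', hup⟩ : ∃ C' ∈ P (m - s), (((V : Set X) ∩ C) \ C').ncard < 2 ^ (j + 1) := by
    by_contra! h
    exact absurd (hmax h) (by omega)
  refine ⟨((V : Set X) ∩ C) \ C', sdiff_subset, hlow C' hC', fun v hv => ⟨?_, ?_⟩⟩
  · exact add_cellCount_le hpart href V (by omega) hC hv.1.2 hlow
  · rw [← pow_succ']
    exact (cellCount_le_ncard_sdiff hpart href V (by omega) hC hC' ⟨hv.1.2, hv.2⟩).trans_lt hup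

end Hierarchy

theorem hierarchical_level_count_general
    {X : Type*} (P : ℤ → Set (Set X)) (V : Finset X) (n s : ℕ)
    (hn : V.card = n)
    (hpart : ∀ m : ℤ, ∀ x : X, ∃! C, C ∈ P m ∧ x ∈ C)
    (href : ∀ m : ℤ, ∀ C ∈ P m, ∃ C' ∈ P (m + 1), C ⊆ C')
    (levSet : Set X → ℤ → Set ℕ)
    (hlev : ∀ (C : Set X) (m : ℤ),
      levSet C m = {j : ℕ | ∀ C' ∈ P (m - s), 2 ^ j ≤ (((V : Set X) ∩ C) \ C').ncard})
    (j : ℕ) :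
    {p : Set X × ℤ | p.1 ∈ P p.2 ∧ IsGreatest (levSet p.1 p.2) j}.Finite ∧
    {p : Set X × ℤ | p.1 ∈ P p.2 ∧ IsGreatest (levSet p.1 p.2) j}.ncard * 2 ^ j
      ≤ 2 * s * n := by
  set W := {q : X × ℤ | q.1 ∈ V ∧ q.2 ∈ jumpTimes (fun k => cellCount V P k q.1) s (2 ^ j)}
  obtain ⟨hWfin, hWcard⟩ : W.Finite ∧ W.ncard ≤ n * (2 * s) :=
    hn ▸ V.finite_and_ncard_setOf_fst_mem_le fun v _ =>
      ⟨(monotone_cellCount hpart href V v).finite_jumpTimes,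
        (monotone_cellCount hpart href V v).ncard_jumpTimes_le⟩
  have hfiber : ∀ p ∈ {p : Set X × ℤ | p.1 ∈ P p.2 ∧ IsGreatest (levSet p.1 p.2) j},
      2 ^ j ≤ {q ∈ W | (cell P q.2 q.1, q.2) = p}.ncard := by
    rintro ⟨C, m⟩ ⟨hC, hj⟩
    rw [hlev] at hj
    obtain ⟨T, hTsub, hTcard, hTjump⟩ := exists_subset_jumpTimes_of_isGreatest hpart href V hC hj
    calc 2 ^ j ≤ T.ncard := hTcard
      _ = ((·, m) '' T).ncard := (ncard_image_of_injective _ (Prod.mk_left_injective m)).symm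
      _ ≤ _ := by
        refine ncard_le_ncard ?_ (hWfin.subset (sep_subset _ _))
        rintro _ ⟨v, hv, rfl⟩
        exact ⟨⟨(hTsub hv).1, hTjump v hv⟩, by rw [cell_eq_of_mem (hpart m v) hC (hTsub hv).2]⟩
  obtain ⟨hSfin, hS⟩ := hWfin.finite_and_ncard_mul_le_of_le_ncard_fiber _ (by positivity) hfiber
  exact ⟨hSfin, hS.trans (hWcard.trans_eq (mul_comm _ _))⟩

/-- Benjamini–Schramm counting lemma: in a bi-infinite hierarchical system of
partitions of `X` in which some level separates the `n` points of `V`, the number of pairs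
`(C, m)` with `C ∈ P m` whose level (largest `j` with `|(V ∩ C) \ C'| ≥ 2^j` for every cell
`C'` at level `m - s`) equals `j` is finite and at most `2·s·n/2^j`. -/
theorem hierarchical_level_count
    {X : Type*} (P : ℤ → Set (Set X)) (V : Finset X) (n s : ℕ)
    (hn : V.card = n) (hs : 1 ≤ s)
    (hpart : ∀ m : ℤ, ∀ x : X, ∃! C, C ∈ P m ∧ x ∈ C)
    (href : ∀ m : ℤ, ∀ C ∈ P m, ∃ C' ∈ P (m + 1), C ⊆ C')
    (m0 : ℤ) (hm0 : ∀ C ∈ P m0, ((V : Set X) ∩ C).ncard ≤ 1)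
    (levSet : Set X → ℤ → Set ℕ)
    (hlev : ∀ (C : Set X) (m : ℤ),
      levSet C m = {j : ℕ | ∀ C' ∈ P (m - s), 2 ^ j ≤ (((V : Set X) ∩ C) \ C').ncard})
    (j : ℕ) :
    {p : Set X × ℤ | p.1 ∈ P p.2 ∧ IsGreatest (levSet p.1 p.2) j}.Finite ∧
    {p : Set X × ℤ | p.1 ∈ P p.2 ∧ IsGreatest (levSet p.1 p.2) j}.ncard * 2 ^ j
      ≤ 2 * s * n :=
  hierarchical_level_count_general P V n s hn hpart href levSet hlev j
end
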